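/- Let σ > 0, β > 0 and consider the scalar smoothed spectral flow ȧ = −f_β((ab−σ)b), ḃ = −f_β((ab−σ)a), f_β(x) = x/√(x²+β), with 0 ≤ a(0), b(0), a(0)b(0) ≤ σ. Define the imbalance d(t) = a(t) − b(t). Then |d(t)| ≤ |d(0)| for all t ≥ 0; i.e., the absolute imbalance between the two factors is non-increasing along the flow as long as ab ≤ σ. -/

import Mathlib

open Set

/-- `f_β(x) = x / √(x² + β)`. -/
noncomputable def fbeta (β x : ℝ) : ℝ := x / Real.sqrt (x ^ 2 + β)

lemma fbeta_mono {β : ℝ} (hβ : 0 < β) : Monotone (fbeta β) := by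
  intro x y hxy
  unfold fbeta
  have hX : (0:ℝ) < Real.sqrt (x ^ 2 + β) := Real.sqrt_pos.2 (by positivity)
  have hY : (0:ℝ) < Real.sqrt (y ^ 2 + β) := Real.sqrt_pos.2 (by positivity)
  have sX : Real.sqrt (x ^ 2 + β) ^ 2 = x ^ 2 + β := Real.sq_sqrt (by positivity)
  have sY : Real.sqrt (y ^ 2 + β) ^ 2 = y ^ 2 + β := Real.sq_sqrt (by positivity)
  rw [div_le_div_iff₀ hX hY]
  rcases le_or_gt 0 x with hx0 | hx0
  · have hy0 : 0 ≤ y := hx0.trans hxy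
    have hx2 : x ^ 2 ≤ y ^ 2 := pow_le_pow_left₀ hx0 hxy 2
    apply le_of_pow_le_pow_left₀ two_ne_zero (mul_nonneg hy0 hX.le)
    rw [mul_pow, mul_pow, sX, sY]; nlinarith
  · rcases le_or_gt 0 y with hy0 | hy0
    · have h1 : x * Real.sqrt (y ^ 2 + β) ≤ 0 :=
        mul_nonpos_of_nonpos_of_nonneg hx0.le hY.le
      have h2 : 0 ≤ y * Real.sqrt (x ^ 2 + β) := mul_nonneg hy0 hX.le
      linarith
    · have hx2 : y ^ 2 ≤ x ^ 2 := by nlinarith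
      have : -y * Real.sqrt (x ^ 2 + β) ≤ -x * Real.sqrt (y ^ 2 + β) := by
        apply le_of_pow_le_pow_left₀ two_ne_zero (mul_nonneg (by linarith) hY.le)
        rw [mul_pow, mul_pow, sX, sY]; nlinarith
      linarith

lemma fbeta_nonneg {β x : ℝ} (hx : 0 ≤ x) : 0 ≤ fbeta β x :=
  div_nonneg hx (Real.sqrt_nonneg _)

lemma fbeta_nonpos {β x : ℝ} (hx : x ≤ 0) : fbeta β x ≤ 0 :=
  div_nonpos_of_nonpos_of_nonneg hx (Real.sqrt_nonneg _)

lemma fbeta_mul_nonneg {β c x : ℝ} (hc : 0 ≤ c) : 0 ≤ fbeta β (c * x) * x := by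
  rcases le_total 0 x with h | h
  · exact mul_nonneg (fbeta_nonneg (mul_nonneg hc h)) h
  · simpa using mul_nonneg
      (neg_nonneg.2 (fbeta_nonpos (mul_nonpos_of_nonneg_of_nonpos hc h)))
      (neg_nonneg.2 h)

/-- Scalar smoothed spectral gradient flow `ȧ = −f_β((ab−σ)b)`,
`ḃ = −f_β((ab−σ)a)` with `0 ≤ a(0), b(0)` and `a(0)b(0) ≤ σ`: the absolute
imbalance `|a(t) − b(t)|` is non-increasing, i.e. `|a t − b t| ≤ |a 0 − b 0|`
for all `t ≥ 0`. -/
theorem scalar_smoothed_flow_imbalance_nonincreasing (σ β : ℝ) (hσ : 0 < σ)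
    (hβ : 0 < β) (a b : ℝ → ℝ)
    (ha : ∀ t ∈ Ici (0 : ℝ),
      HasDerivWithinAt a (-(fbeta β ((a t * b t - σ) * b t))) (Ici 0) t)
    (hb : ∀ t ∈ Ici (0 : ℝ),
      HasDerivWithinAt b (-(fbeta β ((a t * b t - σ) * a t))) (Ici 0) t)
    (ha0 : 0 ≤ a 0) (hb0 : 0 ≤ b 0) (hab0 : a 0 * b 0 ≤ σ) :
    ∀ t ∈ Ici (0 : ℝ), |a t - b t| ≤ |a 0 - b 0| := by
  set A' : ℝ → ℝ := fun t => -(fbeta β ((a t * b t - σ) * b t)) with hA'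
  set B' : ℝ → ℝ := fun t => -(fbeta β ((a t * b t - σ) * a t)) with hB'
  have hcontA : ContinuousOn a (Ici 0) := fun t ht => (ha t ht).continuousWithinAt
  have hcontB : ContinuousOn b (Ici 0) := fun t ht => (hb t ht).continuousWithinAt
  have hderA : ∀ t ∈ Ioi (0:ℝ), HasDerivAt a (A' t) t := fun t ht =>
    (ha t (mem_Ici.2 (le_of_lt (mem_Ioi.1 ht)))).hasDerivAt (Ici_mem_nhds ht)
  have hderB : ∀ t ∈ Ioi (0:ℝ), HasDerivAt b (B' t) t := fun t ht =>
    (hb t (mem_Ici.2 (le_of_lt (mem_Ioi.1 ht)))).hasDerivAt (Ici_mem_nhds ht)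
  have hcontW : ContinuousOn (fun t => a t * b t) (Ici 0) := hcontA.mul hcontB
  -- Step 1: invariance of `a t * b t ≤ σ`
  have hinv : ∀ t ∈ Ici (0:ℝ), a t * b t ≤ σ := by
    intro t₀ ht₀
    by_contra hgt
    push_neg at hgt
    have ht₀pos : 0 < t₀ := by
      rcases (mem_Ici.1 ht₀).lt_or_eq with h | h
      · exact h
      · exact absurd hab0 (by rw [h]; exact not_le.2 hgt)
    set S : Set ℝ := Icc 0 t₀ ∩ (fun t => a t * b t) ⁻¹' Iic σ with hS
    have hS0 : (0:ℝ) ∈ S := ⟨⟨le_refl _, ht₀pos.le⟩, hab0⟩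
    have hSbdd : BddAbove S := ⟨t₀, fun u hu => hu.1.2⟩
    have hScl : IsClosed S :=
      (hcontW.mono (Icc_subset_Ici_self)).preimage_isClosed_of_isClosed
        isClosed_Icc isClosed_Iic
    set s := sSup S with hs
    have hsS : s ∈ S := hScl.csSup_mem ⟨0, hS0⟩ hSbdd
    have hs0 : 0 ≤ s := le_csSup hSbdd hS0
    have hslt : s < t₀ :=
      lt_of_le_of_ne hsS.1.2 fun h => absurd (h ▸ hsS.2) (not_le.2 hgt)
    have hWge : ∀ u ∈ Ioc s t₀, σ ≤ a u * b u := by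
      intro u hu
      by_contra hle
      push_neg at hle
      exact absurd (le_csSup hSbdd ⟨⟨hs0.trans hu.1.le, hu.2⟩, hle.le⟩)
        (not_le.2 hu.1)
    have hanti : AntitoneOn (fun t => a t * b t) (Icc s t₀) := by
      apply antitoneOn_of_deriv_nonpos (convex_Icc s t₀)
        (hcontW.mono (Icc_subset_Ici_self.trans (Ici_subset_Ici.2 hs0)))
      · intro u hu
        rw [interior_Icc] at hu
        have hu0 : 0 < u := lt_of_le_of_lt hs0 hu.1
        exact ((hderA u hu0).mul (hderB u hu0)).differentiableAt.differentiableWithinAt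
      · intro u hu
        rw [interior_Icc] at hu
        have hu0 : 0 < u := lt_of_le_of_lt hs0 hu.1
        rw [show deriv (fun t => a t * b t) u = _ from ((hderA u hu0).mul (hderB u hu0)).deriv]
        have hc : 0 ≤ a u * b u - σ := sub_nonneg.2 (hWge u ⟨hu.1, hu.2.le⟩)
        have h1 : 0 ≤ fbeta β ((a u * b u - σ) * b u) * b u := fbeta_mul_nonneg hc
        have h2 : 0 ≤ fbeta β ((a u * b u - σ) * a u) * a u := fbeta_mul_nonneg hc
        simp only [hA', hB']
        nlinarith
    have := hanti (left_mem_Icc.2 hslt.le) (right_mem_Icc.2 hslt.le) hslt.le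
    exact absurd (this.trans hsS.2) (not_le.2 hgt)
  -- Step 2: `(a - b)²` is non-increasing on `Ici 0`
  have hanti2 : AntitoneOn (fun t => (a t - b t) ^ 2) (Ici 0) := by
    apply antitoneOn_of_deriv_nonpos (convex_Ici 0) ((hcontA.sub hcontB).pow 2)
    · intro u hu
      rw [interior_Ici] at hu
      exact (((hderA u hu).sub (hderB u hu)).pow 2).differentiableAt.differentiableWithinAt
    · intro u hu
      rw [interior_Ici] at hu
      rw [(((hderA u hu).sub (hderB u hu)).pow 2).deriv]
      have hc : a u * b u - σ ≤ 0 := sub_nonpos.2 (hinv u (mem_Ici.2 (mem_Ioi.1 hu).le))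
      have key : (a u - b u) * (A' u - B' u) ≤ 0 := by
        rcases le_total (a u) (b u) with h | h
        · have hm : (a u * b u - σ) * b u ≤ (a u * b u - σ) * a u :=
            mul_le_mul_of_nonpos_left h hc
          have := fbeta_mono hβ hm
          simp only [hA', hB']
          apply mul_nonpos_of_nonpos_of_nonneg <;> linarith
        · have hm : (a u * b u - σ) * a u ≤ (a u * b u - σ) * b u :=
            mul_le_mul_of_nonpos_left h hc
          have := fbeta_mono hβ hm
          simp only [hA', hB']
          apply mul_nonpos_of_nonneg_of_nonpos <;> linarith
      norm_num
      nlinarith [key]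
  intro t ht
  have h2 := hanti2 (self_mem_Ici) ht ht
  rw [← Real.sqrt_sq_eq_abs, ← Real.sqrt_sq_eq_abs]
  exact Real.sqrt_le_sqrt h2
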